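/- For every real number t, the series ∑_{n=0}^{∞} t^{2n+1}/(2n+1)!! converges and equals e^{t²/2} · ∫_{0}^{t} e^{−x²/2} dx (equivalently, e^{t²/2}·√(π/2)·Erf(t/√2)). -/

import Mathlib

open Nat

private lemma dfac_step (n : ℕ) : (2 * (n + 1) + 1)‼ = (2 * n + 3) * (2 * n + 1)‼ := by
  have h : 2 * (n + 1) + 1 = (2 * n + 1) + 2 := by ring
  rw [h, Nat.doubleFactorial_add_two]

private lemma fact_le_dfac (n : ℕ) : n ! ≤ (2 * n + 1)‼ := by
  induction n with
  | zero => simp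
  | succ n ih =>
    rw [dfac_step, Nat.factorial_succ]
    exact Nat.mul_le_mul (by omega) ih

private lemma le_three_pow (n : ℕ) : 2 * n + 1 ≤ 3 ^ n := by
  induction n with
  | zero => simp
  | succ n ih =>
    have : 1 ≤ 3 ^ n := Nat.one_le_pow _ _ (by norm_num)
    calc 2 * (n + 1) + 1 = (2 * n + 1) + 2 := by ring
      _ ≤ 3 ^ n + 2 := by omega
      _ ≤ 3 ^ (n + 1) := by rw [pow_succ]; omega

noncomputable def aa (n : ℕ) (x : ℝ) : ℝ := x ^ (2 * n + 1) / ((2 * n + 1)‼ : ℝ)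
noncomputable def gg (n : ℕ) (x : ℝ) : ℝ :=
  ((2 * n + 1 : ℕ) : ℝ) * x ^ (2 * n) / ((2 * n + 1)‼ : ℝ)

private lemma dfac_pos (n : ℕ) : (0 : ℝ) < ((2 * n + 1)‼ : ℝ) := by
  exact_mod_cast Nat.doubleFactorial_pos _

private lemma summable_aa (x : ℝ) : Summable fun n => aa n x := by
  apply Summable.of_norm_bounded (g := fun n => |x| * (x ^ 2) ^ n / n !)
    (((Real.summable_pow_div_factorial (x ^ 2)).mul_left |x|).congr (by intro n; ring))
  intro n
  have hnum : |x| ^ (2 * n + 1) = |x| * (x ^ 2) ^ n := by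
    rw [pow_add, pow_mul, sq_abs, pow_one, mul_comm]
  have hnorm : ‖aa n x‖ = |x| ^ (2 * n + 1) / ((2 * n + 1)‼ : ℝ) := by
    rw [aa, Real.norm_eq_abs, abs_div, abs_pow, abs_of_pos (dfac_pos n)]
  rw [hnorm, hnum]
  apply div_le_div₀ (by positivity) le_rfl
    (by exact_mod_cast Nat.factorial_pos n) (by exact_mod_cast fact_le_dfac n)

private lemma summable_gg_bound (R : ℝ) (hR : 0 ≤ R) (x : ℝ) (hx : |x| ≤ R) (n : ℕ) :
    ‖gg n x‖ ≤ (3 * R ^ 2) ^ n / n ! := by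
  have hnorm : ‖gg n x‖ = ((2 * n + 1 : ℕ) : ℝ) * |x| ^ (2 * n) / ((2 * n + 1)‼ : ℝ) := by
    rw [gg, Real.norm_eq_abs, abs_div, abs_mul, abs_pow,
      abs_of_pos (dfac_pos n), Nat.abs_cast]
  rw [hnorm]
  have hnum : ((2 * n + 1 : ℕ) : ℝ) * |x| ^ (2 * n) ≤ (3 * R ^ 2) ^ n := by
    have h1 : |x| ^ (2 * n) ≤ (R ^ 2) ^ n := by
      rw [pow_mul, sq_abs]
      exact pow_le_pow_left₀ (sq_nonneg x) (by nlinarith [abs_nonneg x, sq_abs x]) n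
    have h2 : ((2 * n + 1 : ℕ) : ℝ) ≤ 3 ^ n := by exact_mod_cast le_three_pow n
    calc ((2 * n + 1 : ℕ) : ℝ) * |x| ^ (2 * n) ≤ 3 ^ n * (R ^ 2) ^ n := by
          apply mul_le_mul h2 h1 (by positivity) (by positivity)
      _ = (3 * R ^ 2) ^ n := by rw [mul_pow]
  exact div_le_div₀ (by positivity) hnum
    (by exact_mod_cast Nat.factorial_pos n) (by exact_mod_cast fact_le_dfac n)

private lemma summable_gg (x : ℝ) : Summable fun n => gg n x :=
  Summable.of_norm_bounded (Real.summable_pow_div_factorial (3 * (|x| + 1) ^ 2))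
    (summable_gg_bound (|x| + 1) (by positivity) x (by linarith [abs_nonneg x]))

private lemma hasDerivAt_aa (n : ℕ) (x : ℝ) : HasDerivAt (fun y => aa n y) (gg n x) x := by
  have h := (hasDerivAt_pow (2 * n + 1) x).div_const ((2 * n + 1)‼ : ℝ)
  simpa [aa, gg] using h

noncomputable def SS (x : ℝ) : ℝ := ∑' n, aa n x

private lemma hasDerivAt_SS_aux (x : ℝ) : HasDerivAt SS (∑' n, gg n x) x := by
  set R : ℝ := |x| + 1 with hRdef
  have hR : 0 ≤ R := by positivity
  apply hasDerivAt_of_tendstoUniformlyOn (Metric.isOpen_ball (x := (0 : ℝ)) (ε := R))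
    (tendstoUniformlyOn_tsum (Real.summable_pow_div_factorial (3 * R ^ 2))
      (fun n y hy => summable_gg_bound R hR y (by
        simpa [Real.dist_eq] using le_of_lt (Metric.mem_ball.mp hy)) n))
    (Filter.Eventually.of_forall fun s y _ => HasDerivAt.fun_sum fun n _ => hasDerivAt_aa n y)
    (fun y _ => (summable_aa y).hasSum)
  simp [Real.dist_eq]
  linarith [abs_nonneg x]

private lemma tsum_gg_eq (x : ℝ) : ∑' n, gg n x = 1 + x * SS x := by
  rw [Summable.tsum_eq_zero_add (summable_gg x)]
  have h0 : gg 0 x = 1 := by simp [gg]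
  have h1 : ∀ n : ℕ, gg (n + 1) x = x * aa n x := by
    intro n
    have hD : ((2 * n + 1)‼ : ℝ) ≠ 0 := ne_of_gt (dfac_pos n)
    have h3 : ((2 * n + 3 : ℕ) : ℝ) ≠ 0 := by positivity
    rw [gg, aa, dfac_step]
    push_cast
    field_simp
    ring
  rw [h0]
  congr 1
  rw [tsum_congr h1, tsum_mul_left]
  rfl

private lemma hasDerivAt_SS (x : ℝ) : HasDerivAt SS (1 + x * SS x) x := by
  have := hasDerivAt_SS_aux x
  rwa [tsum_gg_eq] at this

/-- ∑_{n=0}^{∞} t^{2n+1}/(2n+1)!! = e^{t²/2} · ∫₀ᵗ e^{−x²/2} dx for every real t. -/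
theorem hasSum_doubleFactorial_erf (t : ℝ) :
    HasSum (fun n : ℕ => t ^ (2 * n + 1) / ((2 * n + 1)‼ : ℝ))
      (Real.exp (t ^ 2 / 2) * ∫ x in (0 : ℝ)..t, Real.exp (-x ^ 2 / 2)) := by
  have hcont : Continuous fun u : ℝ => Real.exp (-u ^ 2 / 2) := by continuity
  set Φ : ℝ → ℝ :=
    fun y => Real.exp (-y ^ 2 / 2) * SS y - ∫ u in (0 : ℝ)..y, Real.exp (-u ^ 2 / 2) with hΦdef
  have hΦ : ∀ y, HasDerivAt Φ 0 y := by
    intro y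
    have h1 : HasDerivAt (fun y : ℝ => -y ^ 2 / 2) (-y) y := by
      have := ((hasDerivAt_pow 2 y).neg).div_const 2
      refine this.congr_deriv ?_
      push_cast
      ring
    have he : HasDerivAt (fun y : ℝ => Real.exp (-y ^ 2 / 2))
        (Real.exp (-y ^ 2 / 2) * (-y)) y := h1.exp
    have hprod := he.mul (hasDerivAt_SS y)
    have hint : HasDerivAt (fun y : ℝ => ∫ u in (0 : ℝ)..y, Real.exp (-u ^ 2 / 2))
        (Real.exp (-y ^ 2 / 2)) y :=
      intervalIntegral.integral_hasDerivAt_right (hcont.intervalIntegrable _ _)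
        (hcont.stronglyMeasurableAtFilter _ _) hcont.continuousAt
    have := hprod.sub hint
    refine this.congr_deriv ?_
    ring
  have hΦconst : Φ t = Φ 0 :=
    is_const_of_deriv_eq_zero (fun y => (hΦ y).differentiableAt)
      (fun y => (hΦ y).deriv) t 0
  have hSS0 : SS 0 = 0 := by
    have : ∀ n, aa n 0 = 0 := fun n => by simp [aa]
    simp [SS, this]
  have hΦ0 : Φ 0 = 0 := by
    simp [hΦdef, hSS0]
  have hkey : Real.exp (-t ^ 2 / 2) * SS t = ∫ u in (0 : ℝ)..t, Real.exp (-u ^ 2 / 2) := by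
    have := hΦconst.trans hΦ0
    simpa [hΦdef, sub_eq_zero] using this
  have hSt : SS t = Real.exp (t ^ 2 / 2) * ∫ u in (0 : ℝ)..t, Real.exp (-u ^ 2 / 2) := by
    rw [← hkey, ← mul_assoc, ← Real.exp_add,
      show t ^ 2 / 2 + -t ^ 2 / 2 = 0 by ring, Real.exp_zero, one_mul]
  have h := (summable_aa t).hasSum
  rw [show (∑' b, aa b t) = SS t from rfl, hSt] at h
  exact h
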